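/- For any y \in \mathbb{Z}^2 \setminus \{0\}, the function x \mapsto \widehat{G}(x,y) is harmonic for the conditioned walk on \mathbb{Z}^2 \setminus \{0, y\}; equivalently, the process \widehat{G}(\widehat{S}_{n \wedge \widehat{\tau}_y}, y) is a martingale. -/

import Mathlib

open Filter
open scoped Classical

/-- The two-dimensional integer lattice. -/
abbrev Z2 := ℤ × ℤ

/-- Euclidean norm on `Z2`. -/
noncomputable def nrm (x : Z2) : ℝ := Real.sqrt ((x.1 : ℝ) ^ 2 + (x.2 : ℝ) ^ 2)

/-- Nearest-neighbour relation on `Z2`. -/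
def nbr (x y : Z2) : Prop := (x.1 - y.1).natAbs + (x.2 - y.2).natAbs = 1

/-- `srwP n x = P_x[S_n = 0]`, the n-step probability for the simple random walk on `Z2`
to be at the origin, defined by first-step decomposition. -/
noncomputable def srwP : ℕ → Z2 → ℝ
  | 0, x => if x = 0 then 1 else 0
  | n + 1, x =>
      (srwP n (x + (1, 0)) + srwP n (x - (1, 0)) + srwP n (x + (0, 1)) + srwP n (x - (0, 1))) / 4

/-- `a` is the potential kernel of the 2D simple random walk:
`a x = ∑_{k=0}^∞ (P_0[S_k = 0] - P_x[S_k = 0])` (convergence of the series). -/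
def IsPotentialKernel (a : Z2 → ℝ) : Prop :=
  ∀ x : Z2,
    Tendsto (fun N => ∑ k ∈ Finset.range N, (srwP k 0 - srwP k x)) atTop (nhds (a x))

/-- Transition matrix of the conditioned walk `Ŝ` (Doob h-transform by `a`):
`P̂(x,y) = a(y) / (4 a(x))` when `x ∼ y`, `x ≠ 0`, `y ≠ 0`, and `0` otherwise. -/
noncomputable def Phat (a : Z2 → ℝ) (x y : Z2) : ℝ :=
  if nbr x y ∧ x ≠ 0 ∧ y ≠ 0 then a y / (4 * a x) else 0

/-- n-step transition probabilities of the conditioned walk. -/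
noncomputable def phat (a : Z2 → ℝ) : ℕ → Z2 → Z2 → ℝ
  | 0, x, y => if x = y then 1 else 0
  | n + 1, x, y => ∑' z, Phat a x z * phat a n z y

/-- Green's function of the conditioned walk: expected number of visits to `y` from `x`. -/
noncomputable def Ghat (a : Z2 → ℝ) (x y : Z2) : ℝ := ∑' n, phat a n x y

/-- `hitLE a A n x = P_x[τ̂_A ≤ n]` for the conditioned walk (entrance time, `τ̂_A = min{n ≥ 0 : Ŝ_n ∈ A}`). -/
noncomputable def hitLE (a : Z2 → ℝ) (A : Set Z2) : ℕ → Z2 → ℝ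
  | 0, x => if x ∈ A then 1 else 0
  | n + 1, x => if x ∈ A then 1 else ∑' z, Phat a x z * hitLE a A n z

/-- `hitProb a A x = P_x[τ̂_A < ∞]` for the conditioned walk. -/
noncomputable def hitProb (a : Z2 → ℝ) (A : Set Z2) (x : Z2) : ℝ := ⨆ n, hitLE a A n x

/-- `retLE a A n x = P_x[τ̂⁺_A ≤ n]`, where `τ̂⁺_A = min{n ≥ 1 : Ŝ_n ∈ A}`. -/
noncomputable def retLE (a : Z2 → ℝ) (A : Set Z2) : ℕ → Z2 → ℝ
  | 0, _ => 0
  | n + 1, x => ∑' z, Phat a x z * hitLE a A n z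

/-- `retProb a A x = P_x[τ̂⁺_A < ∞]` for the conditioned walk. -/
noncomputable def retProb (a : Z2 → ℝ) (A : Set Z2) (x : Z2) : ℝ := ⨆ n, retLE a A n x

/-- `beforeLE a A B n x = P_x[τ̂_A ≤ n and τ̂_A < τ̂_B]`. -/
noncomputable def beforeLE (a : Z2 → ℝ) (A B : Set Z2) : ℕ → Z2 → ℝ
  | 0, x => if x ∈ A then 1 else 0
  | n + 1, x =>
      if x ∈ A then 1 else if x ∈ B then 0 else ∑' z, Phat a x z * beforeLE a A B n z

/-- `beforeProb a A B x = P_x[τ̂_A < τ̂_B]` for the conditioned walk. -/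
noncomputable def beforeProb (a : Z2 → ℝ) (A B : Set Z2) (x : Z2) : ℝ := ⨆ n, beforeLE a A B n x

/-- `entLE a A y n x = P_x[τ̂_A ≤ n, Ŝ_{τ̂_A} = y]`. -/
noncomputable def entLE (a : Z2 → ℝ) (A : Set Z2) (y : Z2) : ℕ → Z2 → ℝ
  | 0, x => if x ∈ A ∧ x = y then 1 else 0
  | n + 1, x =>
      if x ∈ A then (if x = y then 1 else 0) else ∑' z, Phat a x z * entLE a A y n z

/-- `entProb a A y x = P_x[τ̂_A < ∞, Ŝ_{τ̂_A} = y]`. -/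
noncomputable def entProb (a : Z2 → ℝ) (A : Set Z2) (y x : Z2) : ℝ := ⨆ n, entLE a A y n x

/-- `visitsGE a y n t x = P_x[#{0 ≤ j ≤ t : Ŝ_j = y} ≥ n]`. -/
noncomputable def visitsGE (a : Z2 → ℝ) (y : Z2) : ℕ → ℕ → Z2 → ℝ
  | 0, _, _ => 1
  | n + 1, 0, x => if x = y ∧ n = 0 then 1 else 0
  | n + 1, t + 1, x =>
      if x = y then ∑' z, Phat a x z * visitsGE a y n t z
      else ∑' z, Phat a x z * visitsGE a y (n + 1) t z

/-- The symmetrized Green's function `ĝ(x,y) = Ĝ(x,y)/a(y)² = (a(x)+a(y)-a(x-y))/(a(x)a(y))`. -/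
noncomputable def ghat (a : Z2 → ℝ) (x y : Z2) : ℝ := (a x + a y - a (x - y)) / (a x * a y)

/-- The discrete disk `B(y, r)` in `Z2`. -/
def diskB (y : Z2) (r : ℝ) : Set Z2 := {z : Z2 | nrm (z - y) ≤ r}

/-- Inner boundary of a set of `Z2`. -/
def innerBd (A : Set Z2) : Set Z2 := {z : Z2 | z ∈ A ∧ ∃ w, nbr z w ∧ w ∉ A}

/-- Distance from a point to a set. -/
noncomputable def distSet (x : Z2) (A : Set Z2) : ℝ := sInf ((fun y => nrm (x - y)) '' A)

/-- Diameter of a set. -/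
noncomputable def diamSet (A : Set Z2) : ℝ :=
  sSup ((fun p : Z2 × Z2 => nrm (p.1 - p.2)) '' (A ×ˢ A))

/-- Escape probability from `y ∈ A` for the conditioned walk: `P_y[τ̂⁺_A = ∞]`. -/
noncomputable def hatEs (a : Z2 → ℝ) (A : Set Z2) (y : Z2) : ℝ :=
  if y ∈ A then 1 - retProb a A y else 0

/-- Capacity of a finite set for the conditioned walk. -/
noncomputable def hatCap (a : Z2 → ℝ) (A : Finset Z2) : ℝ :=
  ∑ y ∈ A, (a y) ^ 2 * hatEs a (↑A) y

/-- Harmonic measure of the conditioned walk on a finite set. -/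
noncomputable def hatHm (a : Z2 → ℝ) (A : Finset Z2) (y : Z2) : ℝ :=
  (a y) ^ 2 * hatEs a (↑A) y / hatCap a A


/-! The first-step decomposition `p̂ₙ₊₁(x,y) = ∑_z P̂(x,z) p̂ₙ(z,y)` with `p̂₀(x,y) = 0` for `x ≠ y`
gives the identity after summing over `n`, provided the sums over `n` may be exchanged with the
finite sum over the neighbours `z`. Since `Ĝ` is a `tsum` in `ℝ`, the point is that the series
`∑ₙ p̂ₙ(z,y)` for a neighbour `z` with `P̂(x,z) ≠ 0` converges exactly when `∑ₙ p̂ₙ(x,y)` does: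
the kernel is nonnegative (because `a ≥ 0`) and `P̂(x,z) ≠ 0 ↔ P̂(z,x) ≠ 0`, so each series
dominates a shift of the other. -/

open Finset

noncomputable def potentialKernelPartialSum (N : ℕ) (x : Z2) : ℝ :=
  ∑ k ∈ range N, (srwP k 0 - srwP k x)

lemma srwP_nonneg (n : ℕ) (x : Z2) : 0 ≤ srwP n x := by
  induction n generalizing x with
  | zero => simp only [srwP]; positivity
  | succ n ih =>
    simp only [srwP]
    have := ih (x + (1, 0)); have := ih (x - (1, 0))
    have := ih (x + (0, 1)); have := ih (x - (0, 1))
    positivity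

lemma potentialKernelPartialSum_succ (N : ℕ) {x : Z2} (hx : x ≠ 0) :
    potentialKernelPartialSum (N + 1) x =
      (potentialKernelPartialSum N (x + (1, 0)) + potentialKernelPartialSum N (x - (1, 0)) +
        potentialKernelPartialSum N (x + (0, 1)) + potentialKernelPartialSum N (x - (0, 1))) / 4 +
        srwP N 0 := by
  induction N with
  | zero => simp [potentialKernelPartialSum, srwP, hx]
  | succ N ih =>
    have step : ∀ (M : ℕ) (z : Z2), potentialKernelPartialSum (M + 1) z =
        potentialKernelPartialSum M z + (srwP M 0 - srwP M z) := fun M z =>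
      sum_range_succ _ _
    rw [step (N + 1), ih, step N, step N, step N, step N, srwP.eq_2 x N]
    ring

lemma potentialKernelPartialSum_nonneg (N : ℕ) (x : Z2) : 0 ≤ potentialKernelPartialSum N x := by
  induction N generalizing x with
  | zero => simp [potentialKernelPartialSum]
  | succ N ih =>
    by_cases hx : x = 0
    · simp [potentialKernelPartialSum, hx]
    · rw [potentialKernelPartialSum_succ N hx]
      have := ih (x + (1, 0)); have := ih (x - (1, 0))
      have := ih (x + (0, 1)); have := ih (x - (0, 1))
      have := srwP_nonneg N 0
      positivity

lemma IsPotentialKernel.nonneg {a : Z2 → ℝ} (ha : IsPotentialKernel a) (x : Z2) : 0 ≤ a x :=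
  ge_of_tendsto' (ha x) (potentialKernelPartialSum_nonneg · x)

lemma nbr_comm {x z : Z2} : nbr x z ↔ nbr z x := by
  unfold nbr
  omega

def nbrFinset (x : Z2) : Finset Z2 := {x + (1, 0), x - (1, 0), x + (0, 1), x - (0, 1)}

lemma mem_nbrFinset {x z : Z2} : z ∈ nbrFinset x ↔ nbr x z := by
  simp only [nbrFinset, nbr, mem_insert, mem_singleton, Prod.ext_iff, Prod.fst_add, Prod.snd_add,
    Prod.fst_sub, Prod.snd_sub]
  omega

section ConditionedWalk

variable {a : Z2 → ℝ}

lemma Phat_eq_zero_of_notMem_nbrFinset {x z : Z2} (hz : z ∉ nbrFinset x) : Phat a x z = 0 :=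
  if_neg fun h => hz (mem_nbrFinset.mpr h.1)

lemma Phat_nonneg (ha : ∀ x, 0 ≤ a x) (x z : Z2) : 0 ≤ Phat a x z := by
  unfold Phat
  split_ifs
  · exact div_nonneg (ha z) (mul_nonneg zero_le_four (ha x))
  · exact le_rfl

lemma Phat_ne_zero_symm {x z : Z2} (h : Phat a x z ≠ 0) : Phat a z x ≠ 0 := by
  unfold Phat at h ⊢
  split_ifs at h with hxz
  · obtain ⟨hn, hx, hz⟩ := hxz
    have hax : a x ≠ 0 := fun h0 => h (by simp [h0])
    have haz : a z ≠ 0 := fun h0 => h (by simp [h0])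
    rw [if_pos ⟨nbr_comm.mp hn, hz, hx⟩]
    exact div_ne_zero hax (mul_ne_zero four_ne_zero haz)
  · exact absurd rfl h

lemma phat_succ_eq_sum_nbrFinset (n : ℕ) (x y : Z2) :
    phat a (n + 1) x y = ∑ z ∈ nbrFinset x, Phat a x z * phat a n z y :=
  tsum_eq_sum fun _ hz => by rw [Phat_eq_zero_of_notMem_nbrFinset hz, zero_mul]

lemma phat_nonneg (ha : ∀ x, 0 ≤ a x) (n : ℕ) (x y : Z2) : 0 ≤ phat a n x y := by
  induction n generalizing x with
  | zero => simp only [phat]; positivity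
  | succ n ih =>
    rw [phat_succ_eq_sum_nbrFinset]
    exact sum_nonneg fun z _ => mul_nonneg (Phat_nonneg ha x z) (ih z)

lemma Phat_mul_phat_le_phat_succ (ha : ∀ x, 0 ≤ a x) (n : ℕ) (x z y : Z2) :
    Phat a x z * phat a n z y ≤ phat a (n + 1) x y := by
  by_cases hz : z ∈ nbrFinset x
  · rw [phat_succ_eq_sum_nbrFinset]
    exact single_le_sum (f := fun w => Phat a x w * phat a n w y)
      (fun w _ => mul_nonneg (Phat_nonneg ha x w) (phat_nonneg ha n w y)) hz
  · rw [Phat_eq_zero_of_notMem_nbrFinset hz, zero_mul]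
    exact phat_nonneg ha _ x y

lemma summable_phat_of_Phat_ne_zero (ha : ∀ x, 0 ≤ a x) {x z y : Z2} (hxz : Phat a x z ≠ 0)
    (hx : Summable (phat a · x y)) : Summable (phat a · z y) := by
  have hpos : 0 < Phat a x z := lt_of_le_of_ne (Phat_nonneg ha x z) (Ne.symm hxz)
  refine (((summable_nat_add_iff 1).mpr hx).div_const (Phat a x z)).of_nonneg_of_le
    (phat_nonneg ha · z y) fun n => ?_
  rw [le_div_iff₀ hpos, mul_comm]
  exact Phat_mul_phat_le_phat_succ ha n x z y

lemma summable_phat_iff_of_Phat_ne_zero (ha : ∀ x, 0 ≤ a x) {x z y : Z2} (hxz : Phat a x z ≠ 0) :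
    Summable (phat a · z y) ↔ Summable (phat a · x y) :=
  ⟨summable_phat_of_Phat_ne_zero ha (Phat_ne_zero_symm hxz), summable_phat_of_Phat_ne_zero ha hxz⟩

lemma Ghat_eq_tsum_phat_succ {x y : Z2} (hxy : x ≠ y) : Ghat a x y = ∑' n, phat a (n + 1) x y := by
  refine (Nat.succ_injective.tsum_eq fun n hn => ?_).symm
  cases n with
  | zero => exact absurd (if_neg hxy) hn
  | succ n => exact ⟨n, rfl⟩

end ConditionedWalk

theorem Ghat_harmonic_general (a : Z2 → ℝ) (ha : IsPotentialKernel a) (y : Z2) :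
    ∀ x : Z2, x ≠ 0 → x ≠ y → Ghat a x y = ∑' z : Z2, Phat a x z * Ghat a z y := by
  intro x _ hxy
  have ha₀ : ∀ x, 0 ≤ a x := ha.nonneg
  rw [tsum_eq_sum (s := nbrFinset x) fun z hz => by
    rw [Phat_eq_zero_of_notMem_nbrFinset hz, zero_mul]]
  simp only [Ghat, ← tsum_mul_left]
  by_cases hx : Summable (phat a · x y)
  · have hterm : ∀ z ∈ nbrFinset x, Summable (Phat a x z * phat a · z y) := fun z _ => by
      by_cases hxz : Phat a x z = 0
      · simp [hxz]
      · exact ((summable_phat_iff_of_Phat_ne_zero ha₀ hxz).mpr hx).mul_left _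
    rw [← Summable.tsum_finsetSum hterm, ← Ghat, Ghat_eq_tsum_phat_succ hxy]
    simp only [phat_succ_eq_sum_nbrFinset]
  · rw [tsum_eq_zero_of_not_summable hx]
    refine (sum_eq_zero fun z _ => ?_).symm
    by_cases hxz : Phat a x z = 0
    · simp [hxz]
    · rw [tsum_mul_left, tsum_eq_zero_of_not_summable
        ((summable_phat_iff_of_Phat_ne_zero ha₀ hxz).not.mpr hx), mul_zero]

/-- for fixed `y ≠ 0`, the map `x ↦ Ĝ(x,y)` is harmonic for the conditioned
walk on `Z2 \ {0, y}`; equivalently, `Ĝ(Ŝ_{n ∧ τ̂_y}, y)` is a martingale. -/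
theorem Ghat_harmonic (a : Z2 → ℝ) (ha : IsPotentialKernel a) (y : Z2) (hy : y ≠ 0) :
    ∀ x : Z2, x ≠ 0 → x ≠ y → Ghat a x y = ∑' z : Z2, Phat a x z * Ghat a z y :=
  Ghat_harmonic_general a ha y
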